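/- Let k be a field of characteristic p > 0 and S = k[X_1,…,X_n,Y_1,…,Y_n] with n ≥ 1. Then the element (Y_1 · [1,2] · [2,3] ⋯ [n−1,n] · X_n)^{p−1} does not belong to the ideal (X_1^p,…,X_n^p, Y_1^p,…,Y_n^p) of S. -/

import Mathlib

open MvPolynomial

variable (K : Type*) [Field K]

/-- The variable `X_i` of `S = k[X_1, …, X_n, Y_1, …, Y_n]`. -/
noncomputable def Xv {n : ℕ} (i : Fin n) : MvPolynomial (Fin n ⊕ Fin n) K :=
  MvPolynomial.X (Sum.inl i)

/-- The variable `Y_i` of `S = k[X_1, …, X_n, Y_1, …, Y_n]`. -/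
noncomputable def Yv {n : ℕ} (i : Fin n) : MvPolynomial (Fin n ⊕ Fin n) K :=
  MvPolynomial.X (Sum.inr i)

/-- The binomial `[i, j] = X_i Y_j - X_j Y_i`. -/
noncomputable def brkt {n : ℕ} (i j : Fin n) : MvPolynomial (Fin n ⊕ Fin n) K :=
  Xv K i * Yv K j - Xv K j * Yv K i

/-- The binomial edge ideal `J_G = ([i, j] : {i, j} ∈ E(G))`. -/
noncomputable def binomialEdgeIdeal {n : ℕ} (G : SimpleGraph (Fin n)) :
    Ideal (MvPolynomial (Fin n ⊕ Fin n) K) :=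
  Ideal.span {f | ∃ i j : Fin n, G.Adj i j ∧ f = brkt K i j}

/-- The `p`-th Frobenius power `I^{[p]}` of an ideal `I`, generated by `{f^p : f ∈ I}`. -/
def frobeniusPower {R : Type*} [CommRing R] (p : ℕ) (I : Ideal R) : Ideal R :=
  Ideal.span ((fun f => f ^ p) '' (I : Set R))

/-- `F(v) = (Y_{v_1} [v_1,v_2] [v_2,v_3] ⋯ [v_{n-1},v_n] X_{v_n})^{p-1}`. -/
noncomputable def Fpoly {n : ℕ} (p : ℕ) (v : Fin n → Fin n) (hn : 0 < n) :
    MvPolynomial (Fin n ⊕ Fin n) K :=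
  (Yv K (v ⟨0, hn⟩) *
      (∏ t : Fin (n - 1),
        brkt K (v ⟨t, by have := t.isLt; omega⟩) (v ⟨(t : ℕ) + 1, by have := t.isLt; omega⟩)) *
      Xv K (v ⟨n - 1, by omega⟩)) ^ (p - 1)

/-!
Choose a monomial order in which the leading monomial of each `[t, t+1]` is `X_t Y_{t+1}`
(lexicographic with `X_1 > ⋯ > X_n > Y_1 > ⋯ > Y_n`). Since leading monomials are multiplicative
in a domain, the leading monomial of `Y_1 [1,2] ⋯ [n-1,n] X_n` is `Y_1 (X_1 Y_2) ⋯ (X_{n-1} Y_n) X_n`,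
the product of all variables, so the leading monomial of its `(p-1)`-st power has every exponent
equal to `p - 1 < p`. A monomial of the support of an element of `(X_s^p)` is divisible by some
`X_s^p`, so this polynomial is not in the ideal.
-/

open MonomialOrder Finsupp

theorem MvPolynomial.notMem_span_X_pow_of_degree_lt {σ R : Type*} [CommSemiring R]
    (m : MonomialOrder σ) {p : ℕ} {f : MvPolynomial σ R} (hf : f ≠ 0)
    (hdeg : ∀ s, m.degree f s < p) :
    f ∉ Ideal.span (Set.range fun s => (X s : MvPolynomial σ R) ^ p) := by
  have hrange : (Set.range fun s => (X s : MvPolynomial σ R) ^ p) =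
      (fun d => monomial d (1 : R)) '' Set.range fun s => single s p := by
    simp only [← Set.range_comp, Function.comp_def, X_pow_eq_monomial]
  rw [hrange, mem_ideal_span_monomial_image]
  intro h
  obtain ⟨_, ⟨s, rfl⟩, hs⟩ := h _ (m.degree_mem_support hf)
  exact (hdeg s).not_ge (by simpa using hs s)

/-- The exponent vector of `X_i Y_j`. -/
noncomputable def expXY {n : ℕ} (i j : Fin n) : Fin n ⊕ Fin n →₀ ℕ :=
  single (Sum.inl i) 1 + single (Sum.inr j) 1

/-- `Y_1 [1,2] [2,3] ⋯ [n,n+1] X_{n+1}` in `k[X_1, …, X_{n+1}, Y_1, …, Y_{n+1}]`. -/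
noncomputable def pathPoly (n : ℕ) : MvPolynomial (Fin (n + 1) ⊕ Fin (n + 1)) K :=
  Yv K 0 * (∏ t : Fin n, brkt K t.castSucc t.succ) * Xv K (Fin.last n)

theorem Fpoly_id_eq_pathPoly_pow {n : ℕ} (p : ℕ) (hn : 0 < n + 1) :
    Fpoly K p id hn = pathPoly K n ^ (p - 1) :=
  rfl

section Brackets

variable {K} {n : ℕ}

theorem brkt_eq_monomial_sub_monomial (i j : Fin n) :
    brkt K i j = monomial (expXY i j) 1 - monomial (expXY j i) 1 := by
  simp only [brkt, Xv, Yv, X, expXY, monomial_mul, mul_one]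

theorem degree_brkt (m : MonomialOrder (Fin n ⊕ Fin n)) {i j : Fin n}
    (h : expXY j i ≺[m] expXY i j) : m.degree (brkt K i j) = expXY i j := by
  classical
  rw [brkt_eq_monomial_sub_monomial, m.degree_sub_of_lt] <;>
    simp only [m.degree_monomial, one_ne_zero, if_false, h]

theorem brkt_ne_zero (m : MonomialOrder (Fin n ⊕ Fin n)) {i j : Fin n}
    (h : expXY j i ≺[m] expXY i j) : brkt K i j ≠ 0 :=
  m.ne_zero_of_degree_ne_zero <| by simp [degree_brkt m h, expXY]

/- For the lexicographic order, the first variable on which `X_j Y_i` and `X_i Y_j` differ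
is `X_i`. -/
theorem exists_monomialOrder_expXY_lt (n : ℕ) :
    ∃ m : MonomialOrder.{0, 0} (Fin n ⊕ Fin n), ∀ i j : Fin n, i < j →
      expXY j i ≺[m] expXY i j := by
  refine ⟨MonomialOrder.lex (σ := Fin n ⊕ₗ Fin n), fun i j hij => ?_⟩
  refine (MonomialOrder.lex_lt_iff (σ := Fin n ⊕ₗ Fin n)).2 (Finsupp.Lex.lt_iff.2 ?_)
  refine ⟨toLex (Sum.inl i), fun l hl => ?_, ?_⟩
  · obtain ⟨l | l, rfl⟩ := toLex.surjective l
    · have hli : l < i := Sum.Lex.inl_lt_inl_iff.1 hl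
      change expXY j i (Sum.inl l) = expXY i j (Sum.inl l)
      simp [expXY, hli.ne, (hli.trans hij).ne]
    · exact absurd hl Sum.Lex.not_inr_lt_inl
  · change expXY j i (Sum.inl i) < expXY i j (Sum.inl i)
    simp [expXY, hij.ne]

end Brackets

section Path

variable {K} {n : ℕ} (m : MonomialOrder (Fin (n + 1) ⊕ Fin (n + 1)))

theorem prod_brkt_ne_zero
    (hm : ∀ t : Fin n, expXY t.succ t.castSucc ≺[m] expXY t.castSucc t.succ) :
    ∏ t : Fin n, brkt K t.castSucc t.succ ≠ 0 :=
  Finset.prod_ne_zero_iff.2 fun t _ => brkt_ne_zero m (hm t)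

theorem pathPoly_ne_zero
    (hm : ∀ t : Fin n, expXY t.succ t.castSucc ≺[m] expXY t.castSucc t.succ) :
    pathPoly K n ≠ 0 :=
  mul_ne_zero (mul_ne_zero (X_ne_zero _) (prod_brkt_ne_zero m hm)) (X_ne_zero _)

theorem degree_pathPoly
    (hm : ∀ t : Fin n, expXY t.succ t.castSucc ≺[m] expXY t.castSucc t.succ) :
    m.degree (pathPoly K n) = ∑ s, single s 1 := by
  rw [pathPoly, Yv, Xv,
    m.degree_mul (mul_ne_zero (X_ne_zero _) (prod_brkt_ne_zero m hm)) (X_ne_zero _),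
    m.degree_mul (X_ne_zero _) (prod_brkt_ne_zero m hm),
    m.degree_prod fun t _ => brkt_ne_zero m (hm t), m.degree_X, m.degree_X,
    Fintype.sum_sum_type, Fin.sum_univ_castSucc, Fin.sum_univ_succ]
  simp only [degree_brkt m (hm _), expXY, Finset.sum_add_distrib]
  abel

end Path

theorem Fpoly_not_mem_frobenius_max {n : ℕ} (hn : 0 < n)
    (p : ℕ) (hp : p.Prime) :
    Fpoly K p id hn ∉
      Ideal.span (Set.range fun s : Fin n ⊕ Fin n =>
        (MvPolynomial.X s : MvPolynomial (Fin n ⊕ Fin n) K) ^ p) := by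
  obtain ⟨n, rfl⟩ := Nat.exists_eq_succ_of_ne_zero hn.ne'
  obtain ⟨m, hm⟩ := exists_monomialOrder_expXY_lt (n + 1)
  have hpath : ∀ t : Fin n, expXY t.succ t.castSucc ≺[m] expXY t.castSucc t.succ :=
    fun t => hm _ _ t.castSucc_lt_succ
  rw [Fpoly_id_eq_pathPoly_pow]
  refine notMem_span_X_pow_of_degree_lt m (pow_ne_zero _ (pathPoly_ne_zero m hpath)) fun s => ?_
  simp only [m.degree_pow, degree_pathPoly m hpath, Finsupp.smul_apply, finsetSum_apply,
    single_apply, Finset.sum_ite_eq', Finset.mem_univ, if_true, smul_eq_mul, mul_one]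
  exact Nat.sub_lt hp.pos one_pos
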